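/- arXiv:2110.02016 — 2 statements merged into one kernel-verified Lean document; each statement's English description precedes it below -/
import Mathlib

section
/- Under the market balance Σ_{i=1}^I q_i^s + Σ_{j=1}^J q_j^{sr} = D − q^f, together with stationarity c_j − p + ν_j^max − ν_j^min = 0 and complementarity (Q_j − q_j^{sr})ν_j^max = 0, q_j^{sr}ν_j^min = 0 for every rival j, the strategic revenue term p·Σ_{i=1}^I q_i^s equals −Σ_{j=1}^J c_j q_j^{sr} − Σ_{j=1}^J ν_j^max Q_j + p(D − q^f), i.e., the bilinear product linearizes exactly. -/
/-- Exact linearization of the strategic revenue: under the market balance and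
rivals' KKT conditions,
`p·Σ_i q_i^s = −Σ_j c_j q_j^{sr} − Σ_j ν_j^max Q_j + p(D − q^f)`. -/
theorem strategic_revenue_linearization
    (I J : ℕ) (qs : Fin I → ℝ) (qsr c Q νmax νmin : Fin J → ℝ)
    (p D qf : ℝ)
    (hbal : (∑ i, qs i) + (∑ j, qsr j) = D - qf)
    (hstat : ∀ j, c j - p + νmax j - νmin j = 0)
    (hcomp1 : ∀ j, (Q j - qsr j) * νmax j = 0)
    (hcomp2 : ∀ j, qsr j * νmin j = 0)
    (hνmax : ∀ j, 0 ≤ νmax j) (hνmin : ∀ j, 0 ≤ νmin j)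
    (hq0 : ∀ j, 0 ≤ qsr j) (hqQ : ∀ j, qsr j ≤ Q j) :
    p * (∑ i, qs i) =
      -(∑ j, c j * qsr j) - (∑ j, νmax j * Q j) + p * (D - qf) := by
  have key : ∀ j, p * qsr j = c j * qsr j + νmax j * Q j := by
    intro j
    have h1 := hstat j
    have h2 := hcomp1 j
    have h3 := hcomp2 j
    linear_combination (-qsr j) * h1 - h2 - h3
  have : p * (∑ j, qsr j) = (∑ j, c j * qsr j) + (∑ j, νmax j * Q j) := by
    rw [Finset.mul_sum, ← Finset.sum_add_distrib]
    exact Finset.sum_congr rfl fun j _ => key j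
  have hb : (∑ i, qs i) = (D - qf) - (∑ j, qsr j) := by linarith
  rw [hb]; ring_nf; nlinarith [this]
end

section
/- Consider two merit-order clearing problems with the same sorted cost vector c_1 ≤ ... ≤ c_n, total demand d, both with effective total capacity reduced by the same amount q: in problem A every capacity Q_i is reduced proportionally to Q_i − (Q_i/ΣQ_k)·q, in problem B the reduction q is taken entirely from the cheapest units (in merit order). Then the marginal (clearing) cost of problem B is at least that of problem A. -/
/-- Remaining capacities when the reduction `q` is shared proportionally. -/
noncomputable def remCapProp {n : ℕ} (Q : Fin n → ℝ) (q : ℝ) (i : Fin n) : ℝ :=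
  Q i - (Q i / ∑ k, Q k) * q

/-- Remaining capacities when the reduction `q` is taken greedily from the
cheapest (lowest-index) units. -/
noncomputable def remCapGreedy {n : ℕ} (Q : Fin n → ℝ) (q : ℝ) (i : Fin n) : ℝ :=
  Q i - min (Q i) (max 0 (q - ∑ k ∈ Finset.univ.filter (fun k => k < i), Q k))

private lemma min_split (P Qi q : ℝ) (hq : 0 ≤ q) (hQi : 0 ≤ Qi) :
    min q P + min Qi (max 0 (q - P)) = min q (P + Qi) := by
  rcases le_total q P with h | h <;> rcases le_total Qi (q - P) with h2 | h2 <;>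
    simp [min_def, max_def] <;> split_ifs <;> linarith

private lemma greedy_prefix {n : ℕ} (Q : Fin n → ℝ) (hQ : ∀ i, 0 ≤ Q i) (q : ℝ)
    (hq : 0 ≤ q) (j : ℕ) :
    (∑ k ∈ Finset.univ.filter (fun k : Fin n => (k : ℕ) < j),
        min (Q k) (max 0 (q - ∑ l ∈ Finset.univ.filter (fun l => l < k), Q l)))
      = min q (∑ k ∈ Finset.univ.filter (fun k : Fin n => (k : ℕ) < j), Q k) := by
  induction j with
  | zero => simp [hq]
  | succ j ih =>
      by_cases hj : j < n
      · have hfil : (Finset.univ.filter (fun k : Fin n => (k : ℕ) < j + 1))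
            = insert ⟨j, hj⟩ (Finset.univ.filter (fun k : Fin n => (k : ℕ) < j)) := by
          ext k
          simp [Nat.lt_succ_iff_lt_or_eq, Fin.ext_iff, or_comm]
          omega
        have hnot : (⟨j, hj⟩ : Fin n) ∉ Finset.univ.filter (fun k : Fin n => (k : ℕ) < j) := by
          simp
        have hinner : (Finset.univ.filter (fun l : Fin n => l < (⟨j, hj⟩ : Fin n)))
            = Finset.univ.filter (fun l : Fin n => (l : ℕ) < j) := by
          ext l; simp [Fin.lt_def]
        rw [hfil, Finset.sum_insert hnot, Finset.sum_insert hnot, hinner, ih, add_comm,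
          min_split _ _ _ hq (hQ _), add_comm (Q ⟨j, hj⟩)]
      · have hfil : (Finset.univ.filter (fun k : Fin n => (k : ℕ) < j + 1))
            = Finset.univ.filter (fun k : Fin n => (k : ℕ) < j) := by
          ext k
          have := k.isLt
          constructor <;> intro <;> simp <;> omega
        rw [hfil, ih]

/-- If in problem A the capacity reduction `q` is proportional and in problem B
it is taken entirely from the cheapest units, then the clearing (marginal) cost
of problem B is at least that of problem A. -/
theorem greedy_withholding_raises_price
    (n : ℕ) (c Q : Fin n → ℝ) (hc : Monotone c) (hQ : ∀ i, 0 < Q i)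
    (q d : ℝ) (hq0 : 0 ≤ q) (hq : q ≤ ∑ i, Q i)
    (hd0 : 0 < d) (hd : d ≤ (∑ i, Q i) - q)
    (mA mB : Fin n)
    (hA1 : d ≤ ∑ k ∈ Finset.univ.filter (fun k => k ≤ mA), remCapProp Q q k)
    (hA2 : ∀ m < mA, (∑ k ∈ Finset.univ.filter (fun k => k ≤ m), remCapProp Q q k) < d)
    (hB1 : d ≤ ∑ k ∈ Finset.univ.filter (fun k => k ≤ mB), remCapGreedy Q q k)
    (hB2 : ∀ m < mB, (∑ k ∈ Finset.univ.filter (fun k => k ≤ m), remCapGreedy Q q k) < d) :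
    c mA ≤ c mB := by
  have hT : 0 < ∑ i, Q i := by
    apply Finset.sum_pos (fun i _ => hQ i)
    exact ⟨mA, Finset.mem_univ mA⟩
  set T := ∑ i, Q i with hTdef
  -- it suffices that mA ≤ mB
  refine hc (le_of_not_gt fun hlt => ?_)
  -- hlt : mB < mA
  have hfil : (Finset.univ.filter (fun k : Fin n => k ≤ mB))
      = Finset.univ.filter (fun k : Fin n => (k : ℕ) < (mB : ℕ) + 1) := by
    ext k
    simp only [Finset.mem_filter, Finset.mem_univ, true_and, Fin.le_def, Nat.lt_succ_iff]
  set S := ∑ k ∈ Finset.univ.filter (fun k : Fin n => (k : ℕ) < (mB : ℕ) + 1), Q k with hSdef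
  have hS0 : 0 ≤ S :=
    Finset.sum_nonneg fun i _ => (hQ i).le
  have hST : S ≤ T := by
    apply Finset.sum_le_sum_of_subset_of_nonneg (Finset.filter_subset _ _)
    exact fun i _ _ => (hQ i).le
  -- greedy prefix sum equals S - min q S
  have hgr : (∑ k ∈ Finset.univ.filter (fun k : Fin n => k ≤ mB), remCapGreedy Q q k)
      = S - min q S := by
    rw [hfil]
    unfold remCapGreedy
    rw [Finset.sum_sub_distrib, greedy_prefix Q (fun i => (hQ i).le) q hq0]
  -- proportional prefix sum equals S - (S / T) * q
  have hpr : (∑ k ∈ Finset.univ.filter (fun k : Fin n => k ≤ mB), remCapProp Q q k)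
      = S - S / T * q := by
    rw [hfil]
    unfold remCapProp
    rw [Finset.sum_sub_distrib, ← Finset.sum_mul, ← Finset.sum_div]
  -- (S/T) * q ≤ min q S
  have hkey : S / T * q ≤ min q S := by
    refine le_min ?_ ?_
    · have h1 : S / T ≤ 1 := (div_le_one hT).mpr hST
      calc S / T * q ≤ 1 * q := by
            exact mul_le_mul_of_nonneg_right h1 hq0
        _ = q := one_mul q
    · have h1 : q / T ≤ 1 := (div_le_one hT).mpr hq
      calc S / T * q = S * (q / T) := by ring
        _ ≤ S * 1 := mul_le_mul_of_nonneg_left h1 hS0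
        _ = S := mul_one S
  have h1 := hA2 mB hlt
  rw [hpr] at h1
  rw [hgr] at hB1
  linarith
end
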